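/- For all integers N ≥ 1, r ≥ 1 and n ≥ 1, B^{(r)}_{N,n} = (−1)^n · n! · det(A), where A is the n×n matrix with entries A_{i,j} = M_r(i−j+1) for 1 ≤ j ≤ i ≤ n, A_{i,i+1} = 1 for 1 ≤ i ≤ n−1, and A_{i,j} = 0 for j > i+1. -/

import Mathlib

/-!
Since `hgSeries N ^ r` has constant term `1` and `e`-th coefficient `M N r e`, it suffices to
express the coefficients of the inverse `g` of a power series `f` with constant term `1` by
determinants. The relation `f * g = 1` says that the coefficient vector of `g` is the first column
of the inverse of the unitriangular Toeplitz matrix `T` of `f`, which is its adjugate. Hence the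
`n`-th coefficient of `g` is the `(n, 0)` cofactor of `T`, which is `(-1)ⁿ` times the minor
obtained by deleting the first row and the last column: the Hessenberg matrix of the statement.
-/

/-- The power series ∑_{i≥0} (N!/(N+i)!) xⁱ over ℚ. -/
noncomputable def hgSeries (N : ℕ) : PowerSeries ℚ :=
  PowerSeries.mk fun i => (N.factorial : ℚ) / ((N + i).factorial : ℚ)

/-- The higher order hypergeometric Bernoulli number `B^{(r)}_{N,n}`, defined so that
`∑ (B^{(r)}_{N,n}/n!) xⁿ` is the r-th power of the multiplicative inverse of
`hgSeries N` in ℚ[[x]]. -/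
noncomputable def hBr (N r n : ℕ) : ℚ :=
  (n.factorial : ℚ) * PowerSeries.coeff n ((hgSeries N)⁻¹ ^ r)

/-- `M_r(e) = ∑_{i₁+⋯+i_r=e} (N!)^r / ((N+i₁)! ⋯ (N+i_r)!)`. -/
noncomputable def M (N r e : ℕ) : ℚ :=
  ∑ i ∈ Finset.Nat.antidiagonalTuple r e,
    (N.factorial : ℚ) ^ r / ∏ j, ((N + i j).factorial : ℚ)

namespace PowerSeries

open Matrix

theorem coeff_pow_eq_sum_antidiagonalTuple {R : Type*} [CommSemiring R] (φ : R⟦X⟧)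
    (r n : ℕ) :
    coeff n (φ ^ r) = ∑ x ∈ Finset.Nat.antidiagonalTuple r n, ∏ j, coeff (x j) φ := by
  classical
  rw [← Fin.prod_const, coeff_prod, Finset.finsuppAntidiag, Finset.sum_map,
    ← Finset.piAntidiag_univ_fin_eq_antidiagonalTuple]
  exact Finset.sum_attach _ fun x : Fin r → ℕ => ∏ j, coeff (x j) φ

variable {R : Type*} [CommRing R]

noncomputable def lowerToeplitz (f : R⟦X⟧) (n : ℕ) : Matrix (Fin n) (Fin n) R :=
  Matrix.of fun i j => if j ≤ i then coeff (i - j : ℕ) f else 0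

theorem det_lowerToeplitz {f : R⟦X⟧} (hf : constantCoeff f = 1) (n : ℕ) :
    (lowerToeplitz f n).det = 1 := by
  have h : (lowerToeplitz f n).IsLowerTriangular := fun i j hij => if_neg (not_le.2 hij)
  rw [det_of_isLowerTriangular _ h]
  simp [lowerToeplitz, hf]

theorem lowerToeplitz_mulVec_coeff {f g : R⟦X⟧} (hfg : f * g = 1) (n : ℕ) :
    lowerToeplitz f (n + 1) *ᵥ (fun j => coeff (j : ℕ) g) = Pi.single 0 1 := by
  ext i
  have hrange :
      (Finset.range (n + 1)).filter (· ≤ (i : ℕ)) = Finset.range ((i : ℕ) + 1) := by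
    ext k
    simp only [Finset.mem_filter, Finset.mem_range]
    omega
  calc ∑ j, (if j ≤ i then coeff (i - j : ℕ) f else 0) * coeff (j : ℕ) g
      = ∑ k ∈ Finset.range ((i : ℕ) + 1), coeff k g * coeff ((i : ℕ) - k) f := by
        simp only [Fin.le_iff_val_le_val, ite_mul, zero_mul]
        rw [Fin.sum_univ_eq_sum_range
          (fun k => if k ≤ (i : ℕ) then coeff ((i : ℕ) - k) f * coeff k g else 0),
          ← Finset.sum_filter, hrange]
        simp only [mul_comm (coeff _ f)]
    _ = coeff i (g * f) := by rw [coeff_mul, Finset.Nat.sum_antidiagonal_eq_sum_range_succ_mk]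
    _ = (Pi.single 0 1 : Fin (n + 1) → R) i := by
        simp only [mul_comm g, hfg, coeff_one, Pi.single_apply, Fin.ext_iff, Fin.val_zero]

theorem coeff_eq_neg_one_pow_mul_det {f g : R⟦X⟧} (hf : constantCoeff f = 1) (hfg : f * g = 1)
    (n : ℕ) :
    coeff n g = (-1) ^ n * (Matrix.of fun i j : Fin n =>
      if (j : ℕ) = i + 1 then 1
      else if (j : ℕ) ≤ i then coeff ((i : ℕ) - j + 1) f
      else 0).det := by
  set T := lowerToeplitz f (n + 1)
  have hcol : (fun j : Fin (n + 1) => coeff (j : ℕ) g) = T.adjugate *ᵥ Pi.single 0 1 := by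
    rw [← lowerToeplitz_mulVec_coeff hfg, mulVec_mulVec, adjugate_mul, det_lowerToeplitz hf,
      one_smul, one_mulVec]
  calc coeff n g = T.adjugate (Fin.last n) 0 := by simpa using congrFun hcol (Fin.last n)
    _ = (-1) ^ n * (T.submatrix Fin.succ Fin.castSucc).det := by
        simp [adjugate_fin_succ_eq_det_submatrix]
    _ = _ := by
        congr 2
        ext i j
        simp only [T, lowerToeplitz, submatrix_apply, of_apply, Fin.le_iff_val_le_val,
          Fin.val_succ, Fin.val_castSucc]
        by_cases hdiag : (j : ℕ) = i + 1
        · simp [hdiag, hf]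
        by_cases hlow : (j : ℕ) ≤ i
        · rw [if_pos (by omega), if_neg hdiag, if_pos hlow, Nat.sub_add_comm hlow]
        · rw [if_neg (by omega), if_neg hdiag, if_neg hlow]

end PowerSeries

open PowerSeries in
theorem constantCoeff_hgSeries (N : ℕ) : constantCoeff (hgSeries N) = 1 := by
  simp [hgSeries, ← coeff_zero_eq_constantCoeff_apply, Nat.factorial_ne_zero]

open PowerSeries in
theorem coeff_hgSeries_pow (N r e : ℕ) : coeff e (hgSeries N ^ r) = M N r e := by
  simp [coeff_pow_eq_sum_antidiagonalTuple, M, hgSeries, Finset.prod_div_distrib]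

/-- Rows and columns are indexed from 0 here, from 1 in the paper. -/
theorem stmt12_general (N r n : ℕ) :
    hBr N r n = (-1 : ℚ) ^ n * (n.factorial : ℚ) *
      (Matrix.of fun i j : Fin n =>
        if (j : ℕ) = (i : ℕ) + 1 then (1 : ℚ)
        else if (j : ℕ) ≤ (i : ℕ) then M N r ((i : ℕ) - (j : ℕ) + 1)
        else 0).det := by
  have hf : PowerSeries.constantCoeff (hgSeries N ^ r) = 1 := by
    rw [map_pow, constantCoeff_hgSeries, one_pow]
  have hfg : hgSeries N ^ r * (hgSeries N)⁻¹ ^ r = 1 := by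
    rw [← mul_pow, PowerSeries.mul_inv_cancel _ (by simp [constantCoeff_hgSeries]), one_pow]
  simp only [hBr, PowerSeries.coeff_eq_neg_one_pow_mul_det hf hfg, coeff_hgSeries_pow]
  ring

/-- Determinant expression for `B^{(r)}_{N,n}`.  Rows and columns are 0-indexed:
the (i,j) entry with j ≤ i is `M_r(i-j+1)`, the superdiagonal entries are 1,
and all other entries are 0. -/
theorem stmt12 (N r n : ℕ) (hN : 1 ≤ N) (hr : 1 ≤ r) (hn : 1 ≤ n) :
    hBr N r n = (-1 : ℚ) ^ n * (n.factorial : ℚ) *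
      (Matrix.of fun i j : Fin n =>
        if (j : ℕ) = (i : ℕ) + 1 then (1 : ℚ)
        else if (j : ℕ) ≤ (i : ℕ) then M N r ((i : ℕ) - (j : ℕ) + 1)
        else 0).det :=
  stmt12_general N r n
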